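/- arXiv:1811.01587 — 2 statements merged into one kernel-verified Lean document; each statement's English description precedes it below -/
import Mathlib

section
/- Let E and F be real inner product spaces, f : E → ℝ, g : F → ℝ, H : E × F → ℝ, and define Ψ(x, y) = f(x) + g(y) + H(x, y). Fix ζ > 0, η₂ > 0 and C_y ≥ 0. Let x^t, x^{t+1} ∈ E, y^{t−1}, y^t, y^{t+1} ∈ F and an error vector e_y ∈ F satisfy ‖e_y‖ ≤ C_y‖y^t − y^{t−1}‖. Assume the proximal comparison inequality f(x^{t+1}) + H(x^{t+1}, y^t) + (ζ/2)‖x^{t+1} − x^t‖² ≤ f(x^t) + H(x^t, y^t) and the task-embedded comparison inequality g(y^{t+1}) + H(x^{t+1}, y^{t+1}) + (η₂/2)‖y^{t+1} − y^t‖² − ⟨e_y, y^{t+1}⟩ ≤ g(y^t) + H(x^{t+1}, y^t) − ⟨e_y, y^t⟩. Define Φ(x, y, q) = Ψ(x, y) + (C_y²/η₂)‖y − q‖². Then Φ(x^t, y^t, y^{t−1}) − Φ(x^{t+1}, y^{t+1}, y^t) ≥ (ζ/2)‖x^{t+1} − x^t‖² + (η₂/4 − C_y²/η₂)‖y^{t+1}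 − y^t‖². -/
/-!
The x-step decreases `f + H(·, y^t)` by `(ζ/2)‖x^{t+1} - x^t‖²` outright. In the y-step the error
contributes `⟪e_y, y^{t+1} - y^t⟫ ≤ C_y ‖y^t - y^{t-1}‖ ‖y^{t+1} - y^t‖`, and Young's inequality
splits this into half of the proximal gain `(η₂/4)‖y^{t+1} - y^t‖²` plus `(C_y²/η₂)‖y^t - y^{t-1}‖²`,
which is exactly the extra term that the Lyapunov function `Φ` carries from one step to the next.
-/

open scoped RealInnerProductSpace

theorem mul_le_sq_div_add_mul_sq {η : ℝ} (hη : 0 < η) (a b : ℝ) :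
    a * b ≤ a ^ 2 / η + η / 4 * b ^ 2 := by
  have hsq : 0 ≤ (2 * a - η * b) ^ 2 / (4 * η) := by positivity
  have hexpand : (2 * a - η * b) ^ 2 / (4 * η) = a ^ 2 / η + η / 4 * b ^ 2 - a * b := by
    field_simp
    ring
  linarith

section InexactProx

variable {F : Type*} [NormedAddCommGroup F] [InnerProductSpace ℝ F]

theorem inner_sub_inner_le_of_norm_le {η C : ℝ} (hη : 0 < η) {e u y y' : F}
    (he : ‖e‖ ≤ C * ‖u‖) :
    ⟪e, y'⟫ - ⟪e, y⟫ ≤ C ^ 2 / η * ‖u‖ ^ 2 + η / 4 * ‖y' - y‖ ^ 2 :=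
  calc ⟪e, y'⟫ - ⟪e, y⟫ = ⟪e, y' - y⟫ := (inner_sub_right e y' y).symm
    _ ≤ ‖e‖ * ‖y' - y‖ := real_inner_le_norm e (y' - y)
    _ ≤ C * ‖u‖ * ‖y' - y‖ := mul_le_mul_of_nonneg_right he (norm_nonneg _)
    _ ≤ (C * ‖u‖) ^ 2 / η + η / 4 * ‖y' - y‖ ^ 2 := mul_le_sq_div_add_mul_sq hη _ _
    _ = C ^ 2 / η * ‖u‖ ^ 2 + η / 4 * ‖y' - y‖ ^ 2 := by ring

theorem inexact_prox_step_descent (φ : F → ℝ) {η C : ℝ} (hη : 0 < η) {e yₘ y y' : F}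
    (he : ‖e‖ ≤ C * ‖y - yₘ‖)
    (hcomp : φ y' + η / 2 * ‖y' - y‖ ^ 2 - ⟪e, y'⟫ ≤ φ y - ⟪e, y⟫) :
    φ y' + η / 4 * ‖y' - y‖ ^ 2 ≤ φ y + C ^ 2 / η * ‖y - yₘ‖ ^ 2 := by
  linarith [inner_sub_inner_le_of_norm_le (y := y) (y' := y') hη he]

end InexactProx

theorem tecu_descent_case_1_6_general
    {E F : Type*} [NormedAddCommGroup E] [InnerProductSpace ℝ E]
    [NormedAddCommGroup F] [InnerProductSpace ℝ F]
    (f : E → ℝ) (g : F → ℝ) (H : E × F → ℝ)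
    (Ψ : E → F → ℝ) (hΨ : ∀ x y, Ψ x y = f x + g y + H (x, y))
    (ζ η₂ Cy : ℝ) (hη₂ : 0 < η₂)
    (x xp : E) (ym y yp : F) (ey : F)
    (hey : ‖ey‖ ≤ Cy * ‖y - ym‖)
    (hcompx : f xp + H (xp, y) + (ζ / 2) * ‖xp - x‖ ^ 2 ≤ f x + H (x, y))
    (hcompy : g yp + H (xp, yp) + (η₂ / 2) * ‖yp - y‖ ^ 2 - ⟪ey, yp⟫
        ≤ g y + H (xp, y) - ⟪ey, y⟫)
    (Φ : E → F → F → ℝ)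
    (hΦ : ∀ x' y' q, Φ x' y' q = Ψ x' y' + (Cy ^ 2 / η₂) * ‖y' - q‖ ^ 2) :
    Φ x y ym - Φ xp yp y
      ≥ (ζ / 2) * ‖xp - x‖ ^ 2 + (η₂ / 4 - Cy ^ 2 / η₂) * ‖yp - y‖ ^ 2 := by
  have hdescent_y : g yp + H (xp, yp) + η₂ / 4 * ‖yp - y‖ ^ 2
      ≤ g y + H (xp, y) + Cy ^ 2 / η₂ * ‖y - ym‖ ^ 2 :=
    inexact_prox_step_descent (fun y' ↦ g y' + H (xp, y')) hη₂ hey hcompy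
  rw [hΦ, hΦ, hΨ, hΨ]
  linarith only [hcompx, hdescent_y]

/-- Sufficient-descent inequality (Proposition 2, TECU case "1-6"):
x-block updated by an exact proximal step, y-block by a task-embedded inexact step. -/
theorem tecu_descent_case_1_6
    {E F : Type*} [NormedAddCommGroup E] [InnerProductSpace ℝ E]
    [NormedAddCommGroup F] [InnerProductSpace ℝ F]
    (f : E → ℝ) (g : F → ℝ) (H : E × F → ℝ)
    (Ψ : E → F → ℝ) (hΨ : ∀ x y, Ψ x y = f x + g y + H (x, y))
    (ζ η₂ Cy : ℝ) (hζ : 0 < ζ) (hη₂ : 0 < η₂) (hCy : 0 ≤ Cy)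
    (x xp : E) (ym y yp : F) (ey : F)
    (hey : ‖ey‖ ≤ Cy * ‖y - ym‖)
    (hcompx : f xp + H (xp, y) + (ζ / 2) * ‖xp - x‖ ^ 2 ≤ f x + H (x, y))
    (hcompy : g yp + H (xp, yp) + (η₂ / 2) * ‖yp - y‖ ^ 2 - ⟪ey, yp⟫
        ≤ g y + H (xp, y) - ⟪ey, y⟫)
    (Φ : E → F → F → ℝ)
    (hΦ : ∀ x' y' q, Φ x' y' q = Ψ x' y' + (Cy ^ 2 / η₂) * ‖y' - q‖ ^ 2) :
    Φ x y ym - Φ xp yp y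
      ≥ (ζ / 2) * ‖xp - x‖ ^ 2 + (η₂ / 4 - Cy ^ 2 / η₂) * ‖yp - y‖ ^ 2 :=
  tecu_descent_case_1_6_general f g H Ψ hΨ ζ η₂ Cy hη₂ x xp ym y yp ey hey hcompx hcompy Φ hΦ
end

section
/- Let E and F be real inner product spaces and let G_x : E × F → E satisfy the Lipschitz bound ‖G_x(x, y) − G_x(x, y')‖ ≤ M‖y − y'‖ for all x ∈ E, y, y' ∈ F, where M ≥ 0. Fix constants ζ > 0, η₂ > 0 and C_y ≥ 0. Let x^{t−1}, x^t ∈ E, y^{t−2}, y^{t−1}, y^t ∈ F and an error vector e_y ∈ F satisfy ‖e_y‖ ≤ C_y‖y^{t−1} − y^{t−2}‖. For s ∈ {t−1, t}, write D_s = (‖x^s − x^{s−1}‖² + ‖y^s − y^{s−1}‖²)^{1/2}, where x^{t−2} may be taken arbitrary since only D_{t−1} ≥ ‖y^{t−1} − y^{t−2}‖ is used. Then, with b = max{ζ + M + η₂ + 4C_y²/η₂, C_y}, the following bound holds: ‖G_x(x^t, y^t) − G_x(x^t, y^{t−1}) + ζ(x^{t−1} − x^t)‖ + ‖e_y + η₂(y^{t−1}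 − y^t) + (2C_y²/η₂)(y^t − y^{t−1})‖ + ‖(2C_y²/η₂)(y^{t−1} − y^t)‖ ≤ b(D_t + D_{t−1}). -/
/-!
Each of the three subgradient components is bounded by the triangle inequality, using the
Lipschitz bound for `Gx` and the inexactness bound for `ey`, by a nonnegative combination of
`‖x - xm‖`, `‖y - ym‖` and `‖ym - ymm‖`. The first two are dominated by the gap `D_t` and the
last by `D_{t-1}`, and all coefficients are dominated by the max in the statement.
-/

theorem le_rpow_half_sq_add_sq_left (u v : ℝ) :
    u ≤ (u ^ 2 + v ^ 2) ^ ((1 : ℝ) / 2) := by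
  rw [← Real.sqrt_eq_rpow]
  exact Real.le_sqrt_of_sq_le (le_add_of_nonneg_right (sq_nonneg v))

theorem le_rpow_half_sq_add_sq_right (u v : ℝ) :
    v ≤ (u ^ 2 + v ^ 2) ^ ((1 : ℝ) / 2) := by
  rw [add_comm]
  exact le_rpow_half_sq_add_sq_left v u

theorem mul_add_mul_add_mul_le_max_mul_add {p q r a c d S T : ℝ} (hp : 0 ≤ p) (hq : 0 ≤ q)
    (ha : 0 ≤ a) (hd : 0 ≤ d) (haS : a ≤ S) (hcS : c ≤ S) (hdT : d ≤ T) :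
    p * a + q * c + r * d ≤ max (p + q) r * (S + T) := by
  have hmax : 0 ≤ max (p + q) r := (add_nonneg hp hq).trans (le_max_left _ _)
  calc p * a + q * c + r * d ≤ (p + q) * S + max (p + q) r * d := by
        nlinarith [mul_le_mul_of_nonneg_right (le_max_right (p + q) r) hd]
    _ ≤ max (p + q) r * S + max (p + q) r * T := by
        gcongr
        · exact ha.trans haS
        · exact le_max_left _ _
    _ = max (p + q) r * (S + T) := by ring

theorem tecu_bounded_subgradient_case_1_6_general
    {E F : Type*} [NormedAddCommGroup E] [InnerProductSpace ℝ E]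
    [NormedAddCommGroup F] [InnerProductSpace ℝ F]
    (Gx : E × F → E) (M : ℝ) (hM : 0 ≤ M)
    (hLip : ∀ (x : E) (y y' : F), ‖Gx (x, y) - Gx (x, y')‖ ≤ M * ‖y - y'‖)
    (ζ η₂ Cy : ℝ) (hζ : 0 < ζ) (hη₂ : 0 < η₂)
    (xmm xm x : E) (ymm ym y : F) (ey : F)
    (hey : ‖ey‖ ≤ Cy * ‖ym - ymm‖) :
    ‖Gx (x, y) - Gx (x, ym) + ζ • (xm - x)‖
      + ‖ey + η₂ • (ym - y) + (2 * Cy ^ 2 / η₂) • (y - ym)‖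
      + ‖(2 * Cy ^ 2 / η₂) • (ym - y)‖
      ≤ max (ζ + M + η₂ + 4 * Cy ^ 2 / η₂) Cy
        * ((‖x - xm‖ ^ 2 + ‖y - ym‖ ^ 2) ^ ((1 : ℝ) / 2)
          + (‖xm - xmm‖ ^ 2 + ‖ym - ymm‖ ^ 2) ^ ((1 : ℝ) / 2)) := by
  set k := 2 * Cy ^ 2 / η₂
  have hk : 0 ≤ k := by positivity
  have hGx : ‖Gx (x, y) - Gx (x, ym) + ζ • (xm - x)‖ ≤ M * ‖y - ym‖ + ζ * ‖x - xm‖ := by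
    refine (norm_add_le _ _).trans (add_le_add (hLip x y ym) ?_)
    rw [norm_smul_of_nonneg hζ.le, norm_sub_rev]
  have hy : ‖ey + η₂ • (ym - y) + k • (y - ym)‖
      ≤ Cy * ‖ym - ymm‖ + η₂ * ‖y - ym‖ + k * ‖y - ym‖ := by
    refine norm_add₃_le.trans (add_le_add_three hey ?_ ?_)
    · rw [norm_smul_of_nonneg hη₂.le, norm_sub_rev]
    · rw [norm_smul_of_nonneg hk]
  have hk_term : ‖k • (ym - y)‖ = k * ‖y - ym‖ := by
    rw [norm_smul_of_nonneg hk, norm_sub_rev]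
  have hcoeff : ζ + M + η₂ + 4 * Cy ^ 2 / η₂ = ζ + (M + η₂ + 2 * k) := by ring
  rw [hcoeff]
  calc _ ≤ ζ * ‖x - xm‖ + (M + η₂ + 2 * k) * ‖y - ym‖ + Cy * ‖ym - ymm‖ := by
        linear_combination hGx + hy + hk_term.le
    _ ≤ _ := mul_add_mul_add_mul_le_max_mul_add hζ.le (by positivity) (norm_nonneg _)
        (norm_nonneg _) (le_rpow_half_sq_add_sq_left _ _)
        (le_rpow_half_sq_add_sq_right _ _)
        (le_rpow_half_sq_add_sq_right _ _)

/-- Bounded-subgradient estimate (Eq. (7b)) for the TECU case "1-6". -/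
theorem tecu_bounded_subgradient_case_1_6
    {E F : Type*} [NormedAddCommGroup E] [InnerProductSpace ℝ E]
    [NormedAddCommGroup F] [InnerProductSpace ℝ F]
    (Gx : E × F → E) (M : ℝ) (hM : 0 ≤ M)
    (hLip : ∀ (x : E) (y y' : F), ‖Gx (x, y) - Gx (x, y')‖ ≤ M * ‖y - y'‖)
    (ζ η₂ Cy : ℝ) (hζ : 0 < ζ) (hη₂ : 0 < η₂) (hCy : 0 ≤ Cy)
    (xmm xm x : E) (ymm ym y : F) (ey : F)
    (hey : ‖ey‖ ≤ Cy * ‖ym - ymm‖) :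
    ‖Gx (x, y) - Gx (x, ym) + ζ • (xm - x)‖
      + ‖ey + η₂ • (ym - y) + (2 * Cy ^ 2 / η₂) • (y - ym)‖
      + ‖(2 * Cy ^ 2 / η₂) • (ym - y)‖
      ≤ max (ζ + M + η₂ + 4 * Cy ^ 2 / η₂) Cy
        * ((‖x - xm‖ ^ 2 + ‖y - ym‖ ^ 2) ^ ((1 : ℝ) / 2)
          + (‖xm - xmm‖ ^ 2 + ‖ym - ymm‖ ^ 2) ^ ((1 : ℝ) / 2)) :=
  tecu_bounded_subgradient_case_1_6_general Gx M hM hLip ζ η₂ Cy hζ hη₂ xmm xm x ymm ym y ey hey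
end
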